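/- For k_2 ≤ 1 and max{k_1,k_2} ≥ 2, c* := min_{z_1,z_2>0} max{ z_1/(p_{k_1}(z_1)p_{k_2−1}(z_2)), z_2/(p_{k_1−1}(z_1)p_{k_2}(z_2)) } equals min_{z>0} z/p_{k_1}(z) when (k_1,k_2) is replaced by its symmetric counterpart; i.e., c*(0,k) = c*(1,k) = min_{z>0} z/p_k(z) for k ≥ 2. -/

import Mathlib

open Real Filter Set

/-- `truncExpSum k z = Σ_{j≥k} z^j/j!`. -/
noncomputable def truncExpSum (k : ℕ) (z : ℝ) : ℝ :=
  ∑' j : ℕ, if k ≤ j then z ^ j / (Nat.factorial j : ℝ) else 0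

/-- `poisTail k z = P(Poi(z) ≥ k) = e^{-z} Σ_{j≥k} z^j/j!`. -/
noncomputable def poisTail (k : ℕ) (z : ℝ) : ℝ := Real.exp (-z) * truncExpSum k z

/-- Mean of Poisson(z) conditioned on being ≥ k: `ψ_k(z) = z f_{k-1}(z)/f_k(z)`. -/
noncomputable def truncMean (k : ℕ) (z : ℝ) : ℝ :=
  z * truncExpSum (k - 1) z / truncExpSum k z

/-- Second moment of the truncated Poisson. -/
noncomputable def truncSecondMoment (k : ℕ) (z : ℝ) : ℝ :=
  (∑' j : ℕ, if k ≤ j then (j : ℝ) ^ 2 * z ^ j / (Nat.factorial j : ℝ) else 0)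
    / truncExpSum k z

/-- Variance of the truncated Poisson. -/
noncomputable def truncVar (k : ℕ) (z : ℝ) : ℝ :=
  truncSecondMoment k z - (truncMean k z) ^ 2

/-- `φ_r(z) = z·P(Poi(z)=r−1)/P(Poi(z)≥r)` for `r ≥ 1`, with `φ_0 := 0`. -/
noncomputable def phiP (r : ℕ) (z : ℝ) : ℝ :=
  if r = 0 then 0
  else z * (Real.exp (-z) * z ^ (r - 1) / (Nat.factorial (r - 1) : ℝ)) / poisTail r z

/-- `H(z_i,z_o) = (1 − φ_{k_1}(z_i))(1 − φ_{k_2}(z_o)) − φ_{k_1−1}(z_i)φ_{k_2−1}(z_o)`. -/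
noncomputable def Hfun (k1 k2 : ℕ) (zi zo : ℝ) : ℝ :=
  (1 - phiP k1 zi) * (1 - phiP k2 zo) - phiP (k1 - 1) zi * phiP (k2 - 1) zo

/-- `Ψ(z_i,z_o) = max{ z_i/(p_{k_1}(z_i)p_{k_2−1}(z_o)), z_o/(p_{k_2}(z_o)p_{k_1−1}(z_i)) }`. -/
noncomputable def Psi (k1 k2 : ℕ) (zi zo : ℝ) : ℝ :=
  max (zi / (poisTail k1 zi * poisTail (k2 - 1) zo))
      (zo / (poisTail k2 zo * poisTail (k1 - 1) zi))


/-!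
Since `k₁ - 1 = 0` in `ℕ` for `k₁ ≤ 1`, the second entry of `Ψ k₁ k` is `z₂ / p_k(z₂)`, so
`c*(k₁, k) ≥ min_z z / p_k(z)`. Conversely, at a minimiser `z₂` the first entry can be pushed
below the second: `z₂ p_{k-1}(z₂) / p_k(z₂) > 1`, while `z₁ / p_{k₁}(z₁) ≤ z₁ / p_1(z₁) ≤ 1 + z₁`
tends to `1` as `z₁ → 0`. The minimum of `z / p_k(z)` exists for `k ≥ 2` because
`p_k(z) ≤ min(1, z^k)` makes `z / p_k(z)` blow up at both ends of `(0, ∞)`.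
-/

open scoped Nat

lemma Real.hasSum_pow_div_factorial (z : ℝ) : HasSum (fun n => z ^ n / n !) (exp z) := by
  rw [exp_eq_exp_ℝ]
  exact NormedSpace.expSeries_div_hasSum_exp z

section truncExpSum

variable (k : ℕ) {z : ℝ}

lemma truncExpSum_eq_exp_sub (z : ℝ) :
    truncExpSum k z = exp z - ∑ j ∈ Finset.range k, z ^ j / j ! := by
  let g : ℕ → ℝ := fun j => if k ≤ j then z ^ j / j ! else 0
  have hg : ∑ j ∈ Finset.range k, g j = 0 :=
    Finset.sum_eq_zero fun j hj => if_neg (by simpa using hj)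
  have hshift : HasSum (fun j => g (j + k)) (exp z - (∑ j ∈ Finset.range k, z ^ j / j !) - 0) := by
    simpa [g] using (hasSum_nat_add_iff' k).mpr (Real.hasSum_pow_div_factorial z)
  rw [← hg] at hshift
  exact ((hasSum_nat_add_iff' k).mp hshift).tsum_eq

lemma hasSum_truncExpSum (z : ℝ) :
    HasSum (fun j => z ^ (j + k) / (j + k)!) (truncExpSum k z) := by
  rw [truncExpSum_eq_exp_sub]
  exact (hasSum_nat_add_iff' k).mpr (Real.hasSum_pow_div_factorial z)

lemma truncExpSum_pos (hz : 0 < z) : 0 < truncExpSum k z :=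
  hasSum_lt (f := fun _ => 0) (i := 0) (fun j => by positivity) (by positivity) hasSum_zero
    (hasSum_truncExpSum k z)

lemma truncExpSum_le_pow_mul_exp (hz : 0 ≤ z) : truncExpSum k z ≤ z ^ k * exp z := by
  refine hasSum_le (fun j => ?_) (hasSum_truncExpSum k z)
    ((Real.hasSum_pow_div_factorial z).mul_left (z ^ k))
  rw [pow_add, mul_div_assoc', mul_comm (z ^ j)]
  gcongr
  exact Nat.le_add_right j k

lemma truncExpSum_succ_lt (hz : 0 < z) : truncExpSum (k + 1) z < z * truncExpSum k z := by
  refine hasSum_lt (f := fun j => z ^ (j + (k + 1)) / (j + (k + 1))!) (i := 1)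
    (fun j => ?_) ?_ (hasSum_truncExpSum (k + 1) z) ((hasSum_truncExpSum k z).mul_left z)
  all_goals
    simp only [mul_div_assoc', ← pow_succ', ← add_assoc]
  · exact div_le_div_of_nonneg_left (by positivity) (by positivity)
      (mod_cast Nat.factorial_le (Nat.le_succ _))
  · exact div_lt_div_of_pos_left (by positivity) (by positivity)
      (mod_cast (Nat.factorial_lt (by omega)).mpr (Nat.lt_succ_self _))

end truncExpSum

section poisTail

variable (k : ℕ) {z : ℝ}

lemma poisTail_eq_one_sub (z : ℝ) :
    poisTail k z = 1 - exp (-z) * ∑ j ∈ Finset.range k, z ^ j / j ! := by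
  rw [poisTail, truncExpSum_eq_exp_sub, mul_sub, ← exp_add, neg_add_cancel, exp_zero]

@[simp]
lemma poisTail_zero (z : ℝ) : poisTail 0 z = 1 := by
  simp [poisTail_eq_one_sub]

lemma poisTail_one (z : ℝ) : poisTail 1 z = 1 - exp (-z) := by
  simp [poisTail_eq_one_sub]

lemma continuous_poisTail : Continuous (poisTail k) := by
  simp_rw [funext (poisTail_eq_one_sub k)]
  fun_prop

lemma poisTail_pos (hz : 0 < z) : 0 < poisTail k z :=
  mul_pos (exp_pos _) (truncExpSum_pos k hz)

lemma poisTail_le_one (hz : 0 ≤ z) : poisTail k z ≤ 1 := by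
  rw [poisTail_eq_one_sub, sub_le_self_iff]
  exact mul_nonneg (exp_pos _).le (Finset.sum_nonneg fun j _ => by positivity)

lemma poisTail_le_pow (hz : 0 ≤ z) : poisTail k z ≤ z ^ k := by
  calc poisTail k z ≤ exp (-z) * (z ^ k * exp z) :=
        mul_le_mul_of_nonneg_left (truncExpSum_le_pow_mul_exp k hz) (exp_pos _).le
    _ = z ^ k := by rw [mul_left_comm, ← exp_add, neg_add_cancel, exp_zero, mul_one]

lemma poisTail_succ_lt (hz : 0 < z) : poisTail (k + 1) z < z * poisTail k z := by
  rw [poisTail, poisTail, mul_left_comm]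
  exact mul_lt_mul_of_pos_left (truncExpSum_succ_lt k hz) (exp_pos _)

lemma div_poisTail_one_le (hz : 0 < z) : z / poisTail 1 z ≤ 1 + z := by
  rw [div_le_iff₀ (poisTail_pos 1 hz), poisTail_one]
  have : (1 + z) * exp (-z) ≤ 1 :=
    calc (1 + z) * exp (-z) ≤ exp z * exp (-z) := by gcongr; linarith [add_one_le_exp z]
      _ = 1 := by rw [← exp_add, add_neg_cancel, exp_zero]
  linarith

lemma self_le_div_poisTail (hz : 0 < z) : z ≤ z / poisTail k z :=
  le_div_self hz.le (poisTail_pos k hz) (poisTail_le_one k hz.le)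

lemma inv_le_div_poisTail {k : ℕ} (hk : 2 ≤ k) (hz : 0 < z) (hz1 : z ≤ 1) :
    z⁻¹ ≤ z / poisTail k z := by
  have hp : poisTail k z ≤ z ^ 2 :=
    (poisTail_le_pow k hz.le).trans (pow_le_pow_of_le_one hz.le hz1 hk)
  rw [le_div_iff₀ (poisTail_pos k hz)]
  calc z⁻¹ * poisTail k z ≤ z⁻¹ * z ^ 2 := by gcongr
    _ = z := by field_simp

end poisTail

lemma exists_isLeast_div_poisTail {k : ℕ} (hk : 2 ≤ k) :
    ∃ m, IsLeast {x : ℝ | ∃ z > (0 : ℝ), x = z / poisTail k z} m := by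
  -- Substituting `z = exp t` turns the open half-line into `ℝ`, where coercivity applies.
  let g : ℝ → ℝ := fun t => exp t / poisTail k (exp t)
  have hg : Continuous g :=
    continuous_exp.div ((continuous_poisTail k).comp continuous_exp)
      fun t => (poisTail_pos k (exp_pos t)).ne'
  have hbot : Tendsto g atBot atTop := by
    refine tendsto_atTop_mono' _ ?_ (tendsto_exp_atTop.comp tendsto_neg_atBot_atTop)
    filter_upwards [eventually_le_atBot 0] with t ht
    simpa only [Function.comp, exp_neg] using
      inv_le_div_poisTail hk (exp_pos t) (exp_le_one_iff.mpr ht)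
  have htop : Tendsto g atTop atTop :=
    tendsto_atTop_mono (fun t => self_le_div_poisTail k (exp_pos t)) tendsto_exp_atTop
  obtain ⟨t₀, ht₀⟩ := hg.exists_forall_le
    (by rw [cocompact_eq_atBot_atTop]; exact hbot.sup htop)
  refine ⟨g t₀, ⟨exp t₀, exp_pos t₀, rfl⟩, ?_⟩
  rintro _ ⟨z, hz, rfl⟩
  simpa only [g, exp_log hz] using ht₀ (log z)

section Psi

variable {j k : ℕ}

lemma div_poisTail_le_Psi (hj : j ≤ 1) (z₁ z₂ : ℝ) : z₂ / poisTail k z₂ ≤ Psi j k z₁ z₂ := by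
  rw [Psi, Nat.sub_eq_zero_of_le hj, poisTail_zero, mul_one]
  exact le_max_right _ _

lemma exists_Psi_eq (hj : j ≤ 1) (hk : 1 ≤ k) {z : ℝ} (hz : 0 < z) :
    ∃ z₁ > 0, Psi j k z₁ z = z / poisTail k z := by
  obtain ⟨l, rfl⟩ : ∃ l, k = l + 1 := ⟨k - 1, by omega⟩
  have hpl := poisTail_pos l hz
  have hpl1 := poisTail_pos (l + 1) hz
  set C := z * poisTail l z / poisTail (l + 1) z with hC
  have hC1 : 1 < C := (one_lt_div hpl1).mpr (poisTail_succ_lt l hz)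
  have hz₁ : 0 < C - 1 := by linarith
  have hpj : poisTail 1 (C - 1) ≤ poisTail j (C - 1) := by
    interval_cases j
    · simpa using poisTail_le_one 1 hz₁.le
    · rfl
  have hfirst : (C - 1) / poisTail j (C - 1) ≤ C :=
    calc (C - 1) / poisTail j (C - 1) ≤ (C - 1) / poisTail 1 (C - 1) :=
          div_le_div_of_nonneg_left hz₁.le (poisTail_pos 1 hz₁) hpj
      _ ≤ 1 + (C - 1) := div_poisTail_one_le hz₁
      _ = C := by ring
  refine ⟨C - 1, hz₁, ?_⟩
  rw [Psi, Nat.sub_eq_zero_of_le hj, poisTail_zero, mul_one, Nat.add_sub_cancel, max_eq_right]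
  calc (C - 1) / (poisTail j (C - 1) * poisTail l z)
      = (C - 1) / poisTail j (C - 1) / poisTail l z := by rw [div_div]
    _ ≤ C / poisTail l z := by gcongr
    _ = z / poisTail (l + 1) z := by rw [hC]; field_simp

lemma isLeast_Psi (hj : j ≤ 1) (hk : 1 ≤ k) {m : ℝ}
    (hm : IsLeast {x : ℝ | ∃ z > (0 : ℝ), x = z / poisTail k z} m) :
    IsLeast {x : ℝ | ∃ z₁ > (0 : ℝ), ∃ z₂ > (0 : ℝ), x = Psi j k z₁ z₂} m := by
  obtain ⟨⟨z, hz, rfl⟩, hlow⟩ := hm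
  refine ⟨?_, ?_⟩
  · obtain ⟨z₁, hz₁, h⟩ := exists_Psi_eq hj hk hz
    exact ⟨z₁, hz₁, z, hz, h.symm⟩
  · rintro _ ⟨z₁, -, z₂, hz₂, rfl⟩
    exact (hlow ⟨z₂, hz₂, rfl⟩).trans (div_poisTail_le_Psi hj z₁ z₂)

end Psi

/-- `c*(0,k) = c*(1,k) = min_{z>0} z/p_k(z)` for `k ≥ 2`, the minimum
being attained. -/
theorem stmt16 (k : ℕ) (hk : 2 ≤ k) :
    sInf {x : ℝ | ∃ z1 > (0 : ℝ), ∃ z2 > (0 : ℝ), x = Psi 0 k z1 z2}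
        = sInf {x : ℝ | ∃ z > (0 : ℝ), x = z / poisTail k z} ∧
    sInf {x : ℝ | ∃ z1 > (0 : ℝ), ∃ z2 > (0 : ℝ), x = Psi 1 k z1 z2}
        = sInf {x : ℝ | ∃ z > (0 : ℝ), x = z / poisTail k z} ∧
    IsLeast {x : ℝ | ∃ z > (0 : ℝ), x = z / poisTail k z}
      (sInf {x : ℝ | ∃ z > (0 : ℝ), x = z / poisTail k z}) := by
  obtain ⟨m, hm⟩ := exists_isLeast_div_poisTail hk
  have hk₁ : 1 ≤ k := by omega
  rw [hm.csInf_eq, (isLeast_Psi zero_le_one hk₁ hm).csInf_eq,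
    (isLeast_Psi le_rfl hk₁ hm).csInf_eq]
  exact ⟨rfl, rfl, hm⟩
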